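/- arXiv:2209.00556 — 4 statements merged into one kernel-verified Lean document; each statement's English description precedes it below -/
import Mathlib

section
/- Let G be a group, χ₁, χ₂ : G → 𝔽_p homomorphisms, and κ : G → 𝔽_p a 1-cochain with -dκ = χ₁ ⌣ χ₂. Then the pointwise product χ₁·κ satisfies -d(χ₁κ) = χ₁ ⌣ κ + κ ⌣ χ₁ + χ₁² ⌣ χ₂ + χ₁ ⌣ χ₁χ₂, where χ₁² denotes the pointwise square and χ₁χ₂ the pointwise product. -/
/-- If `χ₁, χ₂ : G → 𝔽_p` are homomorphisms and `κ` is a 1-cochain with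
`-dκ = χ₁ ⌣ χ₂`, then the pointwise product `χ₁·κ` satisfies
`-d(χ₁κ) = χ₁ ⌣ κ + κ ⌣ χ₁ + χ₁² ⌣ χ₂ + χ₁ ⌣ χ₁χ₂`. -/
theorem stmt_2 (p : ℕ) [Fact p.Prime]
    (G : Type*) [Group G] (χ₁ χ₂ κ : G → ZMod p)
    (hχ₁ : ∀ g h : G, χ₁ (g * h) = χ₁ g + χ₁ h)
    (hχ₂ : ∀ g h : G, χ₂ (g * h) = χ₂ g + χ₂ h)
    (hκ : ∀ g h : G, κ (g * h) - κ g - κ h = χ₁ g * χ₂ h) :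
    ∀ g h : G,
      (χ₁ (g * h) * κ (g * h)) - (χ₁ g * κ g) - (χ₁ h * κ h)
        = χ₁ g * κ h + κ g * χ₁ h + (χ₁ g) ^ 2 * χ₂ h + χ₁ g * (χ₁ h * χ₂ h) := by
  intro g h
  have h1 := hχ₁ g h
  have h2 := hκ g h
  have h3 : κ (g * h) = κ g + κ h + χ₁ g * χ₂ h := by linear_combination h2
  rw [h1, h3]; ring
end

section
/- Let G be a group, χ₁, χ₂ : G → 𝔽_p homomorphisms with p odd, and suppose κ : G → 𝔽_p satisfies -dκ = χ₁ ⌣ χ₂ and ν : G → 𝔽_p satisfies -dν = χ₁ ⌣ κ + binom(χ₁,2) ⌣ χ₂, where binom(χ₁,2) = (χ₁² - χ₁)/2. Then ν' := χ₁κ - 2ν - κ satisfies -dν' = χ₁ ⌣ (χ₁χ₂ - κ) + κ ⌣ χ₁. -/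
/-- Commutativity relation for triple Massey products: if `-dκ = χ₁ ⌣ χ₂` and
`-dν = χ₁ ⌣ κ + binom(χ₁,2) ⌣ χ₂` with `binom(χ₁,2) = (χ₁² - χ₁)/2` (p odd),
then `ν' := χ₁κ - 2ν - κ` satisfies `-dν' = χ₁ ⌣ (χ₁χ₂ - κ) + κ ⌣ χ₁`. -/
theorem stmt_3 (p : ℕ) [Fact p.Prime] (hp : Odd p)
    (G : Type*) [Group G] (χ₁ χ₂ κ ν : G → ZMod p)
    (hχ₁ : ∀ g h : G, χ₁ (g * h) = χ₁ g + χ₁ h)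
    (hχ₂ : ∀ g h : G, χ₂ (g * h) = χ₂ g + χ₂ h)
    (hκ : ∀ g h : G, κ (g * h) - κ g - κ h = χ₁ g * χ₂ h)
    (hν : ∀ g h : G, ν (g * h) - ν g - ν h
      = χ₁ g * κ h + ((χ₁ g ^ 2 - χ₁ g) / 2) * χ₂ h)
    (ν' : G → ZMod p)
    (hν' : ∀ g : G, ν' g = χ₁ g * κ g - 2 * ν g - κ g) :
    ∀ g h : G, ν' (g * h) - ν' g - ν' h
      = χ₁ g * (χ₁ h * χ₂ h - κ h) + κ g * χ₁ h := by
  intro g h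
  have h2 : (2 : ZMod p) ≠ 0 := by
    intro h0
    have hp2 : p ≠ 2 := fun e => by
      rw [e] at hp; exact (Nat.not_odd_iff_even.mpr even_two) hp
    have hd : p ∣ 2 := (ZMod.natCast_eq_zero_iff 2 p).mp (by exact_mod_cast h0)
    exact hp2 ((Nat.prime_dvd_prime_iff_eq (Fact.out : p.Prime) Nat.prime_two).mp hd)
  have hinv : (2 : ZMod p)⁻¹ * 2 = 1 := inv_mul_cancel₀ h2
  have key : (χ₁ g ^ 2 - χ₁ g) / 2 * 2 = χ₁ g ^ 2 - χ₁ g := div_mul_cancel₀ _ h2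
  have hk := hκ g h
  have hn := hν g h
  rw [hν' (g*h), hν' g, hν' h, hχ₁]
  linear_combination (χ₁ g + χ₁ h - 1) * hk - 2 * hn + χ₂ h * key -
    2 * (χ₁ g ^ 2 - χ₁ g) * χ₂ h * hinv
end

section
/- Let G be a group, G' ≤ G a finite-index subgroup, Y a transversal of G'\G with 1 ∈ Y, y : G → Y and g̃ = g y(g)⁻¹ ∈ G' as above. Given a 1-cocycle φ ∈ Z¹(G', 𝔽_p) (i.e., a homomorphism since the action is trivial), define for each g ∈ G the function Φ_g on X = G'\G by Φ_g(G'x) = φ((y(G'x)·g)~). Then Φ : G → 𝔽_p[X] is a 1-cocycle for the natural right-translation G-action on functions on G'\G: Φ_{st}(x) = Φ_s(x) + Φ_t(x·s) for all s,t ∈ G and x ∈ G'\G. -/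
/-- Explicit inverse of the Shapiro isomorphism on cocycles: given a transversal
`Y` of `G'\G` with representative map `y` and `g̃ = g·y(g)⁻¹ ∈ G'`, and a
homomorphism `φ : G' → 𝔽_p` (a 1-cocycle with trivial coefficients), the function
`Φ_g(G'x) := φ((y(x)·g)~)` is a 1-cocycle for the right-translation action:
`Φ_{st}(x) = Φ_s(x) + Φ_t(x·s)`. -/
theorem stmt_7 (p : ℕ) [Fact p.Prime]
    (G : Type*) [Group G] (G' : Subgroup G) [G'.FiniteIndex]
    (Y : Set G) (h1 : (1 : G) ∈ Y)
    (y : G → G) (hyY : ∀ g : G, y g ∈ Y)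
    (hco : ∀ g : G, g * (y g)⁻¹ ∈ G')
    (huniq : ∀ g : G, ∀ z ∈ Y, g * z⁻¹ ∈ G' → z = y g)
    (φ : G → ZMod p)
    (hφ : ∀ a b : G, a ∈ G' → b ∈ G' → φ (a * b) = φ a + φ b)
    (Φ : G → G → ZMod p)
    (hΦ : ∀ g x : G, Φ g x = φ (y x * g * (y (y x * g))⁻¹)) :
    ∀ s t x : G, Φ (s * t) x = Φ s x + Φ t (x * s) := by
  intro s t x
  have key : y (x * s) = y (y x * s) := by
    refine huniq (y x * s) (y (x * s)) (hyY _) ?_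
    have h : y x * s * (y (x * s))⁻¹ = (x * (y x)⁻¹)⁻¹ * (x * s * (y (x * s))⁻¹) := by
      group
    rw [h]
    exact mul_mem (inv_mem (hco x)) (hco (x * s))
  have ha : y x * s * (y (x * s))⁻¹ ∈ G' := by
    have := hco (y x * s); rwa [← key] at this
  have key2 : y (y (x * s) * t) = y (y x * (s * t)) := by
    refine huniq (y x * (s * t)) (y (y (x * s) * t)) (hyY _) ?_
    have h : y x * (s * t) * (y (y (x * s) * t))⁻¹
        = (y x * s * (y (x * s))⁻¹) * (y (x * s) * t * (y (y (x * s) * t))⁻¹) := by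
      group
    rw [h]
    exact mul_mem ha (hco _)
  rw [hΦ, hΦ, hΦ, ← key, ← key2]
  have h : y x * (s * t) * (y (y (x * s) * t))⁻¹
      = (y x * s * (y (x * s))⁻¹) * (y (x * s) * t * (y (y (x * s) * t))⁻¹) := by
    group
  rw [h]
  exact hφ _ _ ha (hco _)
end

section
/- Let p ≥ 3 be prime and let B ⊂ GL₂(𝔽_p) be the subgroup of matrices of the form [[*,*],[0,1]]. Let V ⊂ M₂(𝔽_p) be the 3-dimensional subspace of trace-zero matrices with the adjoint (conjugation) action of B. Then the action of B on the set of 1-dimensional subspaces (lines) of V has exactly 5 orbits, of cardinalities 1, p, p, p(p-1)/2, p(p-1)/2; representatives are: the line through [[0,1],[0,0]]; the line through [[1,0],[0,-1]] (orbit of size p consisting of upper-triangular non-strictly-upper-triangular lines); the line through [[0,0],[1,0]] (orbit of size p); the line through [[0,1],[1,0]]; and the line through [[0,b],[1,0]] with b a fixed non-square in 𝔽_p^×. -/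
/-!
Scaling a nonzero trace-zero matrix `!![x, y; z, -x]` so that `z = 1` (or, if `z = 0`, so that
`x = 1`) shows that its line is the line of `!![0, 1; 0, 0]`, of `!![1, u; 0, -1]`, or of
`!![u, t - u ^ 2; 1, -u]`, for unique `u, t`. Conjugation by `!![a, c; 0, 1]` fixes the first line
and acts by `u ↦ a u - 2 c` on the second family and by `(u, t) ↦ (a u + c, a ^ 2 t)` on the third.
So the orbits are a point, the whole second family, and, in the third, the sets where `t` runs
over `{0}`, the nonzero squares, or the nonsquares; multiplication by a nonsquare swaps the last
two, so each has `(p - 1) / 2` elements.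
-/

open Matrix

namespace BorelAdjoint

variable {K : Type*} [Field K]

def tracelessMat (x y z : K) : Matrix (Fin 2) (Fin 2) K := !![x, y; z, -x]

/-- Coordinates on the lines of trace-zero matrices: `none`, `inl u` and `inr (u, t)` stand for
the lines of `!![0, 1; 0, 0]`, `!![1, u; 0, -1]` and `!![u, t - u ^ 2; 1, -u]` (of determinant
`-t`). -/
abbrev LineCoord (K : Type*) := Option (K ⊕ K × K)

def lineGen : LineCoord K → Matrix (Fin 2) (Fin 2) K
  | none => tracelessMat 0 1 0
  | some (.inl u) => tracelessMat 1 u 0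
  | some (.inr (u, t)) => tracelessMat u (t - u ^ 2) 1

def line (P : LineCoord K) : Submodule K (Matrix (Fin 2) (Fin 2) K) :=
  Submodule.span K {lineGen P}

open Classical in
noncomputable def coordOf (x y z : K) : LineCoord K :=
  if z ≠ 0 then some (.inr (x / z, (x / z) ^ 2 + y / z))
  else if x ≠ 0 then some (.inl (y / x))
  else none

lemma coordOf_mul {μ : K} (hμ : μ ≠ 0) (x y z : K) :
    coordOf (μ * x) (μ * y) (μ * z) = coordOf x y z := by
  unfold coordOf
  split_ifs <;> simp_all [mul_div_mul_left]

lemma coordOf_lineGen (P : LineCoord K) :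
    coordOf (lineGen P 0 0) (lineGen P 0 1) (lineGen P 1 0) = P := by
  rcases P with _ | u | ⟨u, t⟩ <;> simp [coordOf, lineGen, tracelessMat]

lemma line_injective : Function.Injective (line (K := K)) := by
  intro P Q h
  obtain ⟨μ, hμ⟩ := Submodule.span_singleton_eq_span_singleton.mp h
  rw [← coordOf_lineGen P, ← coordOf_lineGen Q, ← hμ]
  simp only [Units.smul_def, Matrix.smul_apply, smul_eq_mul, coordOf_mul μ.ne_zero]

lemma tracelessMat_eq_zero_iff {x y z : K} :
    tracelessMat x y z = 0 ↔ x = 0 ∧ y = 0 ∧ z = 0 := by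
  simp [← Matrix.ext_iff, Fin.forall_fin_two, tracelessMat]
  tauto

lemma lineGen_coordOf {x y z : K} (h : tracelessMat x y z ≠ 0) :
    ∃ μ : K, μ ≠ 0 ∧ lineGen (coordOf x y z) = μ • tracelessMat x y z := by
  rw [ne_eq, tracelessMat_eq_zero_iff] at h
  by_cases hz : z = 0
  · by_cases hx : x = 0
    · have hy : y ≠ 0 := by tauto
      refine ⟨y⁻¹, inv_ne_zero hy, ?_⟩
      simp [coordOf, lineGen, tracelessMat, hx, hz, hy]
    · refine ⟨x⁻¹, inv_ne_zero hx, ?_⟩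
      simp [coordOf, lineGen, tracelessMat, hz, hx, div_eq_inv_mul]
  · refine ⟨z⁻¹, inv_ne_zero hz, ?_⟩
    simp [coordOf, lineGen, tracelessMat, hz, div_eq_inv_mul]

lemma eq_tracelessMat_of_trace_eq_zero {v : Matrix (Fin 2) (Fin 2) K} (htr : v.trace = 0) :
    v = tracelessMat (v 0 0) (v 0 1) (v 1 0) := by
  rw [trace_fin_two, add_eq_zero_iff_eq_neg'] at htr
  rw [eta_fin_two v, htr]; rfl

lemma lineGen_ne_zero (P : LineCoord K) : lineGen P ≠ 0 := by
  rcases P with _ | u | ⟨u, t⟩ <;> simp [lineGen, tracelessMat_eq_zero_iff]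

lemma trace_lineGen (P : LineCoord K) : (lineGen P).trace = 0 := by
  rcases P with _ | u | ⟨u, t⟩ <;> simp [lineGen, tracelessMat, trace_fin_two]

def tracelessLines (K : Type*) [Field K] : Set (Submodule K (Matrix (Fin 2) (Fin 2) K)) :=
  {W | (∀ m ∈ W, Matrix.trace m = 0) ∧
    ∃ v : Matrix (Fin 2) (Fin 2) K, v ≠ 0 ∧ W = Submodule.span K {v}}

theorem tracelessLines_eq_range : tracelessLines K = Set.range line := by
  ext W
  constructor
  · rintro ⟨htr, v, hv, rfl⟩
    rw [eq_tracelessMat_of_trace_eq_zero (htr v (Submodule.mem_span_singleton_self v))] at hv ⊢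
    obtain ⟨μ, hμ, h⟩ := lineGen_coordOf hv
    exact ⟨_, by rw [line, h, Submodule.span_singleton_smul_eq hμ.isUnit]⟩
  · rintro ⟨P, rfl⟩
    refine ⟨fun m hm => ?_, lineGen P, lineGen_ne_zero P, rfl⟩
    obtain ⟨μ, rfl⟩ := Submodule.mem_span_singleton.mp hm
    rw [trace_smul, trace_lineGen, smul_zero]

def IsBorelConj (W W' : Submodule K (Matrix (Fin 2) (Fin 2) K)) : Prop :=
  ∃ g : GL (Fin 2) K, (g : Matrix (Fin 2) (Fin 2) K) 1 0 = 0 ∧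
    (g : Matrix (Fin 2) (Fin 2) K) 1 1 = 1 ∧
    W' = Submodule.map ((LinearMap.mulLeft K (g : Matrix (Fin 2) (Fin 2) K)).comp
      (LinearMap.mulRight K (↑(g⁻¹) : Matrix (Fin 2) (Fin 2) K))) W

lemma inv_borelMat {a : K} (ha : a ≠ 0) (c : K) :
    (!![a, c; 0, 1])⁻¹ = !![a⁻¹, -(a⁻¹ * c); 0, 1] := by
  refine inv_eq_right_inv ?_
  simp [ha, one_fin_two]

theorem isBorelConj_span_singleton_iff (v : Matrix (Fin 2) (Fin 2) K)
    (W : Submodule K (Matrix (Fin 2) (Fin 2) K)) :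
    IsBorelConj (Submodule.span K {v}) W ↔
      ∃ a c : K, a ≠ 0 ∧ W = Submodule.span K {!![a, c; 0, 1] * v * (!![a, c; 0, 1])⁻¹} := by
  simp only [IsBorelConj, Submodule.map_span, Set.image_singleton, LinearMap.comp_apply,
    LinearMap.mulLeft_apply, LinearMap.mulRight_apply, coe_units_inv, ← mul_assoc]
  constructor
  · rintro ⟨g, h10, h11, rfl⟩
    obtain ⟨a, c, hg⟩ : ∃ a c : K, (g : Matrix (Fin 2) (Fin 2) K) = !![a, c; 0, 1] :=
      ⟨_, _, by rw [← h10, ← h11]; exact eta_fin_two _⟩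
    have hdet := ((isUnit_iff_isUnit_det _).mp g.isUnit).ne_zero
    rw [hg] at hdet ⊢
    exact ⟨a, c, by simpa using hdet, rfl⟩
  · rintro ⟨a, c, ha, rfl⟩
    exact ⟨GeneralLinearGroup.mkOfDetNeZero !![a, c; 0, 1] (by simpa using ha),
      rfl, rfl, rfl⟩

def borelAct (a c : K) : LineCoord K → LineCoord K
  | none => none
  | some (.inl u) => some (.inl (a * u - 2 * c))
  | some (.inr (u, t)) => some (.inr (a * u + c, a ^ 2 * t))

lemma span_borel_conj_lineGen {a : K} (ha : a ≠ 0) (c : K) (P : LineCoord K) :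
    Submodule.span K {!![a, c; 0, 1] * lineGen P * (!![a, c; 0, 1])⁻¹} =
      line (borelAct a c P) := by
  obtain ⟨μ, hμ, h⟩ : ∃ μ : K, μ ≠ 0 ∧
      !![a, c; 0, 1] * lineGen P * !![a⁻¹, -(a⁻¹ * c); 0, 1] = μ • lineGen (borelAct a c P) := by
    rcases P with _ | u | ⟨u, t⟩
    · refine ⟨a, ha, ?_⟩
      ext i j; fin_cases i <;> fin_cases j <;> simp [lineGen, borelAct, tracelessMat]
    · refine ⟨1, one_ne_zero, ?_⟩
      ext i j; fin_cases i <;> fin_cases j <;> simp [lineGen, borelAct, tracelessMat, ha]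
      ring
    · refine ⟨a⁻¹, inv_ne_zero ha, ?_⟩
      ext i j; fin_cases i <;> fin_cases j <;> simp [lineGen, borelAct, tracelessMat]
        <;> field_simp
      ring
  rw [inv_borelMat ha, h, Submodule.span_singleton_smul_eq hμ.isUnit, line]

def borelOrbit (P : LineCoord K) : Set (LineCoord K) :=
  {Q | ∃ a c : K, a ≠ 0 ∧ Q = borelAct a c P}

theorem isBorelConj_line_iff (P : LineCoord K) (W : Submodule K (Matrix (Fin 2) (Fin 2) K)) :
    IsBorelConj (line P) W ↔ W ∈ line '' borelOrbit P := by
  simp only [line, isBorelConj_span_singleton_iff, Set.mem_image, borelOrbit, Set.mem_ofPred_eq]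
  constructor
  · rintro ⟨a, c, ha, rfl⟩
    exact ⟨_, ⟨a, c, ha, rfl⟩, (span_borel_conj_lineGen ha c P).symm⟩
  · rintro ⟨_, ⟨a, c, ha, rfl⟩, rfl⟩
    exact ⟨a, c, ha, (span_borel_conj_lineGen ha c P).symm⟩

lemma borelOrbit_none : borelOrbit (none : LineCoord K) = {none} := by
  ext Q
  simpa [borelOrbit, borelAct] using fun _ => ⟨1, one_ne_zero⟩

lemma borelOrbit_inl (h2 : (2 : K) ≠ 0) (u : K) :
    borelOrbit (some (.inl u)) = Set.range (some ∘ Sum.inl) := by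
  ext Q
  simp only [borelOrbit, borelAct, Set.mem_ofPred_eq, Set.mem_range, Function.comp_apply]
  constructor
  · rintro ⟨a, c, -, rfl⟩
    exact ⟨_, rfl⟩
  · rintro ⟨w, rfl⟩
    refine ⟨1, (u - w) / 2, one_ne_zero, ?_⟩
    rw [one_mul, mul_div_cancel₀ _ h2, sub_sub_cancel]

def sqOrbit (t : K) : Set K := {s | ∃ a : K, a ≠ 0 ∧ s = a ^ 2 * t}

lemma borelOrbit_inr (u t : K) :
    borelOrbit (some (.inr (u, t))) = (some ∘ Sum.inr) '' (Set.univ ×ˢ sqOrbit t) := by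
  ext Q
  simp only [borelOrbit, borelAct, sqOrbit, Set.mem_ofPred_eq, Set.mem_image, Set.mem_prod,
    Set.mem_univ, true_and, Function.comp_apply, Prod.exists]
  constructor
  · rintro ⟨a, c, ha, rfl⟩
    exact ⟨_, _, ⟨a, ha, rfl⟩, rfl⟩
  · rintro ⟨w, _, ⟨a, ha, rfl⟩, rfl⟩
    exact ⟨a, w - a * u, ha, by rw [add_sub_cancel]⟩

lemma some_inr_mem_borelOrbit_inr {u t u' t' : K} :
    some (.inr (u, t)) ∈ borelOrbit (some (.inr (u', t'))) ↔ t ∈ sqOrbit t' := by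
  rw [borelOrbit_inr]
  exact ((Option.some_injective _).comp Sum.inr_injective).mem_set_image.trans (by simp)

lemma sqOrbit_zero : sqOrbit (0 : K) = {0} := by
  ext s
  simpa [sqOrbit] using fun _ => ⟨1, one_ne_zero⟩

lemma mem_sqOrbit_one {s : K} : s ∈ sqOrbit 1 ↔ s ≠ 0 ∧ IsSquare s := by
  simp only [sqOrbit, Set.mem_ofPred_eq, mul_one]
  constructor
  · rintro ⟨a, ha, rfl⟩
    exact ⟨pow_ne_zero 2 ha, a, sq a⟩
  · rintro ⟨hs, a, rfl⟩
    exact ⟨a, left_ne_zero_of_mul hs, (sq a).symm⟩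

lemma sqOrbit_eq_image_mul (t : K) : sqOrbit t = (· * t) '' sqOrbit 1 := by
  ext s
  simp [sqOrbit, eq_comm]

lemma ncard_sqOrbit {t : K} (ht : t ≠ 0) : (sqOrbit t).ncard = (sqOrbit (1 : K)).ncard := by
  rw [sqOrbit_eq_image_mul, Set.ncard_image_of_injective _ (mul_left_injective₀ ht)]

theorem ncard_setOf_isBorelConj_line (P : LineCoord K) :
    {W ∈ Set.range line | IsBorelConj (line P) W}.ncard = (borelOrbit P).ncard := by
  have : {W ∈ Set.range line | IsBorelConj (line P) W} = line '' borelOrbit P := by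
    ext W
    rw [Set.mem_sep_iff, isBorelConj_line_iff,
      and_iff_right_of_imp (Set.image_subset_range _ _ ·)]
  rw [this, Set.ncard_image_of_injective _ line_injective]

lemma ncard_borelOrbit_inl (h2 : (2 : K) ≠ 0) (u : K) :
    (borelOrbit (some (.inl u))).ncard = Nat.card K := by
  rw [borelOrbit_inl h2,
    Set.ncard_range_of_injective ((Option.some_injective _).comp Sum.inl_injective)]

lemma ncard_borelOrbit_inr (u t : K) :
    (borelOrbit (some (.inr (u, t)))).ncard = Nat.card K * (sqOrbit t).ncard := by
  rw [borelOrbit_inr,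
    Set.ncard_image_of_injective _ ((Option.some_injective _).comp Sum.inr_injective),
    Set.ncard_prod, Set.ncard_univ]

section FiniteField

variable {F : Type*} [Field F] [Fintype F]

lemma isSquare_div_of_not_isSquare {s b : F} (hs : ¬IsSquare s) (hb : ¬IsSquare b) :
    IsSquare (s / b) := by
  classical
  have hb0 : b ≠ 0 := fun h => hb (h ▸ IsSquare.zero)
  have hs0 : s ≠ 0 := fun h => hs (h ▸ IsSquare.zero)
  have hχ : quadraticChar F (s / b) * quadraticChar F b = quadraticChar F s := by
    rw [← map_mul, div_mul_cancel₀ s hb0]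
  rw [quadraticChar_neg_one_iff_not_isSquare.mpr hs,
    quadraticChar_neg_one_iff_not_isSquare.mpr hb] at hχ
  exact (quadraticChar_one_iff_isSquare (div_ne_zero hs0 hb0)).mp (by linarith)

lemma mem_sqOrbit_of_not_isSquare {b s : F} (hb : ¬IsSquare b) :
    s ∈ sqOrbit b ↔ ¬IsSquare s := by
  constructor
  · rintro ⟨a, ha, rfl⟩ hs
    exact hb (by simpa [ha] using hs.div (IsSquare.sq a))
  · intro hs
    obtain ⟨r, hr⟩ := isSquare_div_of_not_isSquare hs hb
    have hb0 : b ≠ 0 := fun h => hb (h ▸ IsSquare.zero)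
    refine ⟨r, fun h => hs ?_, ?_⟩
    · simp_all
    · rw [sq, ← hr, div_mul_cancel₀ s hb0]

lemma mem_sqOrbit_trichotomy {b : F} (hb : ¬IsSquare b) (t : F) :
    t ∈ sqOrbit 0 ∨ t ∈ sqOrbit 1 ∨ t ∈ sqOrbit b := by
  rw [sqOrbit_zero, mem_sqOrbit_one, mem_sqOrbit_of_not_isSquare hb]
  tauto

theorem two_mul_ncard_sqOrbit_one (hF : ringChar F ≠ 2) :
    2 * (sqOrbit (1 : F)).ncard = Nat.card F - 1 := by
  obtain ⟨b, hb⟩ := FiniteField.exists_nonsquare hF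
  have hb0 : b ≠ 0 := fun h => hb (h ▸ IsSquare.zero)
  have hdisj : Disjoint (sqOrbit 1) (sqOrbit b) := by
    rw [Set.disjoint_left]
    intro s h1 hb'
    exact (mem_sqOrbit_of_not_isSquare hb).mp hb' (mem_sqOrbit_one.mp h1).2
  have hunion : sqOrbit 1 ∪ sqOrbit b = {0}ᶜ := by
    ext s
    rw [Set.mem_union, mem_sqOrbit_one, mem_sqOrbit_of_not_isSquare hb]
    by_cases hs : s = 0 <;> simp [hs, em]
  rw [two_mul]
  nth_rewrite 2 [← ncard_sqOrbit hb0]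
  rw [← Set.ncard_union_eq hdisj, hunion, Set.ncard_compl, Set.ncard_singleton]

theorem mem_borelOrbit_representatives (h2 : (2 : F) ≠ 0) {b : F} (hb : ¬IsSquare b)
    (Q : LineCoord F) :
    Q ∈ borelOrbit none ∨ Q ∈ borelOrbit (some (.inl 0)) ∨ Q ∈ borelOrbit (some (.inr (0, 0))) ∨
      Q ∈ borelOrbit (some (.inr (0, 1))) ∨ Q ∈ borelOrbit (some (.inr (0, b))) := by
  rcases Q with _ | u | ⟨u, t⟩
  · simp [borelOrbit_none]
  · simp [borelOrbit_inl h2]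
  · simp only [some_inr_mem_borelOrbit_inr]
    simp [borelOrbit_none, borelOrbit_inl h2, mem_sqOrbit_trichotomy hb t]

end FiniteField

end BorelAdjoint

open BorelAdjoint in
/-- Orbit classification for the adjoint action of the Borel `B = [[*,*],[0,1]]` of
`GL₂(𝔽_p)` on the lines of the space `V` of trace-zero `2×2` matrices (`p ≥ 3`):
there are exactly 5 orbits, of cardinalities `1, p, p, p(p-1)/2, p(p-1)/2`, with
representatives the lines through `[[0,1],[0,0]]`, `[[1,0],[0,-1]]`, `[[0,0],[1,0]]`,
`[[0,1],[1,0]]`, and `[[0,b],[1,0]]` for a fixed non-square `b`. -/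
theorem stmt_14 (p : ℕ) [Fact p.Prime] (hp3 : 3 ≤ p)
    (b : ZMod p) (hb : ¬ IsSquare b)
    (conj : GL (Fin 2) (ZMod p) →
      Matrix (Fin 2) (Fin 2) (ZMod p) →ₗ[ZMod p] Matrix (Fin 2) (Fin 2) (ZMod p))
    (hconj : ∀ g : GL (Fin 2) (ZMod p),
      conj g = (LinearMap.mulLeft (ZMod p) ((g : Matrix (Fin 2) (Fin 2) (ZMod p)))).comp
        (LinearMap.mulRight (ZMod p) ((↑(g⁻¹) : Matrix (Fin 2) (Fin 2) (ZMod p)))))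
    (L : Set (Submodule (ZMod p) (Matrix (Fin 2) (Fin 2) (ZMod p))))
    (hL : L = {W | (∀ m ∈ W, Matrix.trace m = 0) ∧
      ∃ v : Matrix (Fin 2) (Fin 2) (ZMod p), v ≠ 0 ∧ W = Submodule.span (ZMod p) {v}})
    (rel : Submodule (ZMod p) (Matrix (Fin 2) (Fin 2) (ZMod p)) →
      Submodule (ZMod p) (Matrix (Fin 2) (Fin 2) (ZMod p)) → Prop)
    (hrel : ∀ W W', rel W W' ↔ ∃ g : GL (Fin 2) (ZMod p),
      (g : Matrix (Fin 2) (Fin 2) (ZMod p)) 1 0 = 0 ∧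
      (g : Matrix (Fin 2) (Fin 2) (ZMod p)) 1 1 = 1 ∧
      W' = Submodule.map (conj g) W)
    (r₁ r₂ r₃ r₄ r₅ : Submodule (ZMod p) (Matrix (Fin 2) (Fin 2) (ZMod p)))
    (h₁ : r₁ = Submodule.span (ZMod p) {!![0, 1; 0, 0]})
    (h₂ : r₂ = Submodule.span (ZMod p) {!![1, 0; 0, -1]})
    (h₃ : r₃ = Submodule.span (ZMod p) {!![0, 0; 1, 0]})
    (h₄ : r₄ = Submodule.span (ZMod p) {!![0, 1; 1, 0]})
    (h₅ : r₅ = Submodule.span (ZMod p) {!![0, b; 1, 0]}) :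
    (r₁ ∈ L ∧ r₂ ∈ L ∧ r₃ ∈ L ∧ r₄ ∈ L ∧ r₅ ∈ L) ∧
    (∀ W ∈ L, rel r₁ W ∨ rel r₂ W ∨ rel r₃ W ∨ rel r₄ W ∨ rel r₅ W) ∧
    List.Pairwise (fun r r' => ¬ rel r r') [r₁, r₂, r₃, r₄, r₅] ∧
    Set.ncard {W ∈ L | rel r₁ W} = 1 ∧
    Set.ncard {W ∈ L | rel r₂ W} = p ∧
    Set.ncard {W ∈ L | rel r₃ W} = p ∧
    Set.ncard {W ∈ L | rel r₄ W} = p * (p - 1) / 2 ∧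
    Set.ncard {W ∈ L | rel r₅ W} = p * (p - 1) / 2 := by
  have hF : ringChar (ZMod p) ≠ 2 := by rw [ZMod.ringChar_zmod_n]; omega
  have h2 : (2 : ZMod p) ≠ 0 := Ring.two_ne_zero hF
  have hb0 : b ≠ 0 := fun h => hb (h ▸ IsSquare.zero)
  obtain rfl : conj = _ := funext hconj
  obtain rfl : rel = IsBorelConj := funext₂ fun W W' => propext (hrel W W')
  obtain rfl : L = Set.range line := hL.trans tracelessLines_eq_range
  obtain rfl : r₁ = line none := by simp [h₁, line, lineGen, tracelessMat]
  obtain rfl : r₂ = line (some (.inl 0)) := by simp [h₂, line, lineGen, tracelessMat]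
  obtain rfl : r₃ = line (some (.inr (0, 0))) := by simp [h₃, line, lineGen, tracelessMat]
  obtain rfl : r₄ = line (some (.inr (0, 1))) := by simp [h₄, line, lineGen, tracelessMat]
  obtain rfl : r₅ = line (some (.inr (0, b))) := by simp [h₅, line, lineGen, tracelessMat]
  have hcard : p * (sqOrbit (1 : ZMod p)).ncard = p * (p - 1) / 2 := by
    have h := two_mul_ncard_sqOrbit_one hF
    rw [Nat.card_zmod] at h
    rw [← h, mul_left_comm, Nat.mul_div_cancel_left _ two_pos]
  simp only [ncard_setOf_isBorelConj_line]
  refine ⟨by simp, ?_, ?_, ?_, ?_, ?_, ?_, ?_⟩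
  · rintro _ ⟨Q, rfl⟩
    simpa only [isBorelConj_line_iff, line_injective.mem_set_image] using
      mem_borelOrbit_representatives h2 hb Q
  · simp only [List.pairwise_cons, List.forall_mem_cons, List.not_mem_nil, IsEmpty.forall_iff,
      implies_true, List.Pairwise.nil, and_true, isBorelConj_line_iff,
      line_injective.mem_set_image]
    simp [borelOrbit_none, borelOrbit_inl h2, some_inr_mem_borelOrbit_inr, sqOrbit_zero,
      mem_sqOrbit_one, hb, hb0]
  · rw [borelOrbit_none, Set.ncard_singleton]
  · rw [ncard_borelOrbit_inl h2, Nat.card_zmod]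
  · rw [ncard_borelOrbit_inr, sqOrbit_zero, Set.ncard_singleton, Nat.card_zmod, mul_one]
  · rw [ncard_borelOrbit_inr, Nat.card_zmod, hcard]
  · rw [ncard_borelOrbit_inr, Nat.card_zmod, ncard_sqOrbit hb0, hcard]
end
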